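/- Let z = (z_1,…,z_n) be an optimal solution to the polymatroid sum problem max Σ_e min{Σ_i z_i(e), b(e)}. Then a set S is maximal overdemanded if and only if: E∖S is i-tight for every i, S contains no undersold item, and S contains all oversold items. Moreover, there exists a unique inclusion-wise minimal set with these properties. -/

import Mathlib

open Finset

variable {E : Type*} [Fintype E] [DecidableEq E]

/-- Characteristic (unit) vector of an item. -/
def chi (e : E) : E → ℤ := fun f => if f = e then 1 else 0

/-- The integer box `[0, b]_ℤ`. -/
def Box (b : E → ℤ) : Set (E → ℤ) := {z | ∀ e, 0 ≤ z e ∧ z e ≤ b e}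

/-- M-convex set: exchange property. -/
def MConvex (B : Set (E → ℤ)) : Prop :=
  ∀ x ∈ B, ∀ y ∈ B, ∀ e : E, y e < x e →
    ∃ f : E, x f < y f ∧ x - chi e + chi f ∈ B ∧ y + chi e - chi f ∈ B

/-- `ρ` is the rank function of `B`: `ρ S = max {z(S) : z ∈ B}`. -/
def IsRank (B : Set (E → ℤ)) (ρ : Finset E → ℤ) : Prop :=
  ∀ S : Finset E, IsGreatest ((fun z : E → ℤ => ∑ e ∈ S, z e) '' B) (ρ S)

/-- A set `S` is tight for `z` if `z(S) = ρ S`. -/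
def Tight (ρ : Finset E → ℤ) (z : E → ℤ) (S : Finset E) : Prop :=
  ∑ e ∈ S, z e = ρ S

/-- Total supply covered by the allocation `z`, capped by `b`. -/
def coveredValue {N : Type*} [Fintype N] (b : E → ℤ) (z : N → E → ℤ) : ℤ :=
  ∑ e : E, min (∑ i, z i e) (b e)

/-- The dual objective `Σ_i ρ_i(E∖S) + b(S)`. -/
def dualValue {N : Type*} [Fintype N] (b : E → ℤ) (ρ : N → Finset E → ℤ)
    (S : Finset E) : ℤ :=
  ∑ i, ρ i Sᶜ + ∑ e ∈ S, b e

/-- The three characterizing properties of a maximal overdemanded set, given an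
optimal allocation `z`: the complement is `i`-tight for all `i`, `S` contains no
undersold item, and `S` contains every oversold item. -/
def OverProps {N : Type*} [Fintype N] (b : E → ℤ) (ρ : N → Finset E → ℤ)
    (z : N → E → ℤ) (S : Finset E) : Prop :=
  (∀ i, ∑ e ∈ Sᶜ, z i e = ρ i Sᶜ) ∧
  (∀ e ∈ S, ¬ (∑ i, z i e < b e)) ∧
  (∀ e, b e < ∑ i, z i e → e ∈ S)


open Relation

/-!
`dualValue S - coveredValue z` is a sum of three non-negative slacks (the non-tightness of `Sᶜ`
for each buyer, the unsold supply in `S`, the excess demand outside `S`), which vanish exactly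
when `S` has the three properties. So it suffices to exhibit one set with these properties: the
set `Q` of items reachable from an oversold item along exchange arcs `e → f`, where some buyer `i`
can trade a unit of `e` for a unit of `f` inside `B i`.

An exchange arc cannot enter a tight set from outside, so `Q` lies in every set with the three
properties. Conversely `Qᶜ` is closed under incoming arcs, which by M-convexity makes it tight.
Finally `Q` contains no undersold item: on a shortest path from an oversold to an undersold item,
performing the first exchange either increases the covered value or leaves an optimal allocation
with a strictly shorter such path.
-/

omit [Fintype E] in
lemma sum_chi (S : Finset E) (a : E) : ∑ g ∈ S, chi a g = if a ∈ S then 1 else 0 := by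
  simp [chi]

omit [Fintype E] in
lemma sum_sub_chi_add_chi (S : Finset E) (x : E → ℤ) (e f : E) :
    ∑ g ∈ S, (x - chi e + chi f) g
      = ∑ g ∈ S, x g - (if e ∈ S then 1 else 0) + (if f ∈ S then 1 else 0) := by
  simp only [Pi.add_apply, Pi.sub_apply, sum_add_distrib, sum_sub_distrib, sum_chi]

omit [Fintype E] in
lemma MConvex.exchange_transfer {B : Set (E → ℤ)} (hM : MConvex B) {x : E → ℤ} {a a' e f : E}
    (ha : x - chi a + chi a' ∈ B) (hef : x - chi e + chi f ∈ B)
    (haa' : a ≠ a') (hae : a ≠ e) (haf : a ≠ f) :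
    x - chi a + chi a' - chi e + chi f ∈ B ∨ x - chi a + chi f ∈ B := by
  obtain ⟨g, hg, hmem, -⟩ := hM _ hef _ ha a (by simp [chi, haa', hae, haf])
  have : g = a' ∨ g = e := by
    by_contra! h
    simp only [Pi.add_apply, Pi.sub_apply, chi, if_neg h.1, if_neg h.2] at hg
    split_ifs at hg <;> omega
  rcases this with rfl | rfl
  · left; convert hmem using 1; abel
  · right; convert hmem using 1; abel

section Rank

variable {B : Set (E → ℤ)} {ρ : Finset E → ℤ}

omit [Fintype E] [DecidableEq E] in
lemma IsRank.sum_le (hρ : IsRank B ρ) {x : E → ℤ} (hx : x ∈ B) (S : Finset E) :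
    ∑ e ∈ S, x e ≤ ρ S :=
  (hρ S).2 ⟨x, hx, rfl⟩

omit [Fintype E] [DecidableEq E] in
lemma IsRank.exists_tight (hρ : IsRank B ρ) (S : Finset E) : ∃ y ∈ B, Tight ρ y S :=
  (hρ S).1

omit [Fintype E] in
lemma Tight.mem_of_exchange_mem (hρ : IsRank B ρ) {x : E → ℤ} {T : Finset E}
    (hT : Tight ρ x T) {e f : E} (hx : x - chi e + chi f ∈ B) (hf : f ∈ T) : e ∈ T := by
  by_contra he
  have := hρ.sum_le hx T
  rw [sum_sub_chi_add_chi, if_neg he, if_pos hf, hT] at this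
  omega

lemma tight_of_exchange_closed (hM : MConvex B) (hρ : IsRank B ρ) {w : E → ℤ}
    (hw : w ∈ B) {R : Finset E} (hR : ∀ e f, e ∈ R → w - chi f + chi e ∈ B → f ∈ R) :
    Tight ρ w R := by
  let dist : (E → ℤ) → ℕ := fun y => ∑ g, (y g - w g).natAbs
  -- if `w` is not tight on `R`, the maximizer of `R` closest to `w` can be moved closer
  obtain ⟨y, ⟨hyB, hyR⟩, hmin⟩ : ∃ y ∈ {y | y ∈ B ∧ Tight ρ y R},
      ∀ y' ∈ {y | y ∈ B ∧ Tight ρ y R}, dist y ≤ dist y' :=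
    ⟨_, Function.argminOn_mem dist _ (hρ.exists_tight R),
      fun _ hy' => Function.argminOn_le _ _ hy'⟩
  by_contra hne
  have hlt : ∑ e ∈ R, w e < ∑ e ∈ R, y e := hyR ▸ lt_of_le_of_ne (hρ.sum_le hw R) hne
  obtain ⟨e, heR, he⟩ := exists_lt_of_sum_lt hlt
  obtain ⟨f, hf, hy', hw'⟩ := hM y hyB w hw e he
  have hfR : f ∈ R := hR e f heR (by convert hw' using 1; abel)
  refine (hmin (y - chi e + chi f) ⟨hy', ?_⟩).not_gt ?_
  · unfold Tight at hyR ⊢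
    rw [sum_sub_chi_add_chi, if_pos heR, if_pos hfR, hyR]
    ring
  · refine sum_lt_sum (fun g _ => ?_) ⟨e, mem_univ e, ?_⟩ <;>
      simp only [Pi.add_apply, Pi.sub_apply, chi] <;> split_ifs <;> subst_vars <;> omega

end Rank

namespace Relation

variable {α : Type*}

def ReachesIn (r : α → α → Prop) : ℕ → α → α → Prop
  | 0, a, b => a = b
  | k + 1, a, c => ∃ b, r a b ∧ ReachesIn r k b c

lemma reflTransGen_iff_exists_reachesIn {r : α → α → Prop} {a b : α} :
    ReflTransGen r a b ↔ ∃ k, ReachesIn r k a b := by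
  constructor
  · intro h
    induction h using ReflTransGen.head_induction_on with
    | refl => exact ⟨0, rfl⟩
    | head hac _ ih => obtain ⟨k, hk⟩ := ih; exact ⟨k + 1, _, hac, hk⟩
  · rintro ⟨k, hk⟩
    induction k generalizing a with
    | zero => exact hk ▸ .refl
    | succ k ih => obtain ⟨c, hac, hc⟩ := hk; exact .head hac (ih hc)

end Relation

section Allocation

variable {N : Type*}

def ExchangeArc (B : N → Set (E → ℤ)) (w : N → E → ℤ) (e f : E) : Prop :=
  ∃ i, w i - chi e + chi f ∈ B i

variable [Fintype N] [DecidableEq N]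

omit [Fintype E] in
lemma sum_update_sub_chi_add_chi (w : N → E → ℤ) (i : N) (a a' e : E) :
    ∑ j, Function.update w i (w i - chi a + chi a') j e = ∑ j, w j e - chi a e + chi a' e := by
  rw [Fintype.sum_eq_add_sum_compl i, Fintype.sum_eq_add_sum_compl i (fun j => w j e),
    Function.update_self]
  rw [sum_congr rfl fun j hj => by rw [Function.update_of_ne (by simpa using hj)]]
  simp only [Pi.add_apply, Pi.sub_apply]
  ring

lemma coveredValue_update_exchange (b : E → ℤ) (w : N → E → ℤ) (i : N) {o u : E} (hou : o ≠ u)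
    (ho : b o < ∑ j, w j o) :
    coveredValue b (Function.update w i (w i - chi o + chi u)) =
      coveredValue b w + if ∑ j, w j u < b u then 1 else 0 := by
  have key : ∀ e, min (∑ j, Function.update w i (w i - chi o + chi u) j e) (b e)
      = min (∑ j, w j e) (b e) + if e = u then (if ∑ j, w j u < b u then 1 else 0) else 0 := by
    intro e
    rw [sum_update_sub_chi_add_chi]
    by_cases heu : e = u
    · subst heu; simp only [chi, if_neg hou.symm, if_true]; split_ifs <;> omega
    · by_cases heo : e = o
      · subst heo; simp only [chi, if_neg heu, if_true]; omega
      · simp [chi, heo, heu]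
  simp only [coveredValue, key, sum_add_distrib, sum_ite_eq', mem_univ, if_true]

omit [Fintype E] [Fintype N] in
lemma reachesIn_update_exchange {B : N → Set (E → ℤ)} (hM : ∀ i, MConvex (B i))
    {w : N → E → ℤ} {i : N} {a a' u : E} (ha : w i - chi a + chi a' ∈ B i) (haa' : a ≠ a')
    {m : ℕ} {v : E} (hv : ReachesIn (ExchangeArc B w) m v u)
    (hshort : ∀ j ≤ m, ¬ ReachesIn (ExchangeArc B w) j a u) :
    ReachesIn (ExchangeArc B (Function.update w i (w i - chi a + chi a'))) m v u := by
  induction m generalizing v with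
  | zero => exact hv
  | succ m ih =>
    obtain ⟨v₁, ⟨i', hi'⟩, hrest⟩ := hv
    refine ⟨v₁, ?_, ih hrest fun j hj => hshort j (by omega)⟩
    by_cases hii : i' = i
    · subst hii
      have hav : a ≠ v := by rintro rfl; exact hshort (m + 1) le_rfl ⟨v₁, ⟨i', hi'⟩, hrest⟩
      have hav₁ : a ≠ v₁ := by rintro rfl; exact hshort m (by omega) hrest
      -- the arc `v → v₁` survives the exchange `a → a'` unless it gives a shortcut `a → v₁`
      rcases (hM i').exchange_transfer ha hi' haa' hav hav₁ with h | h
      · exact ⟨i', by rwa [Function.update_self]⟩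
      · exact absurd ⟨v₁, ⟨i', h⟩, hrest⟩ (hshort (m + 1) le_rfl)
    · exact ⟨i', by rwa [Function.update_of_ne hii]⟩

lemma not_reachesIn_of_optimal (b : E → ℤ) {B : N → Set (E → ℤ)} (hM : ∀ i, MConvex (B i))
    (k : ℕ) {w : N → E → ℤ} (hw : ∀ i, w i ∈ B i)
    (hopt : ∀ w' : N → E → ℤ, (∀ i, w' i ∈ B i) → coveredValue b w' ≤ coveredValue b w)
    {o u : E} (ho : b o < ∑ i, w i o) (hu : ∑ i, w i u < b u) :
    ¬ ReachesIn (ExchangeArc B w) k o u := by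
  induction k using Nat.strong_induction_on generalizing w o with
  | _ k ih =>
  intro hk
  cases k with
  | zero => subst hk; omega
  | succ k =>
  obtain ⟨a', ⟨i, hi⟩, hrest⟩ := hk
  have hshort : ∀ j ≤ k, ¬ ReachesIn (ExchangeArc B w) j o u :=
    fun j hj => ih j (by omega) hw hopt ho hu
  have hoa' : o ≠ a' := by rintro rfl; exact hshort k le_rfl hrest
  set w' := Function.update w i (w i - chi o + chi a')
  have hw' : ∀ j, w' j ∈ B j := by
    intro j
    by_cases hji : j = i
    · subst hji; simpa [w'] using hi
    · simpa [w', Function.update_of_ne hji] using hw j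
  have hcov : coveredValue b w' = coveredValue b w + if ∑ j, w j a' < b a' then 1 else 0 :=
    coveredValue_update_exchange b w i hoa' ho
  have ha' : ¬ ∑ j, w j a' < b a' := fun h => by
    rw [if_pos h] at hcov
    have := hopt w' hw'
    omega
  rw [if_neg ha', add_zero] at hcov
  have hdem : ∀ e, ∑ j, w' j e = ∑ j, w j e - chi o e + chi a' e :=
    sum_update_sub_chi_add_chi w i o a'
  have hua' : u ≠ a' := by rintro rfl; exact ha' hu
  have huo : u ≠ o := by rintro rfl; omega
  refine ih k (by omega) hw' (fun z hz => hcov ▸ hopt z hz) ?_ ?_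
    (reachesIn_update_exchange hM hi hoa' hrest hshort)
  · rw [hdem]; simp only [chi, if_neg hoa'.symm, if_true]; omega
  · rw [hdem]; simp only [chi, if_neg huo, if_neg hua']; omega

end Allocation

section Duality

variable {N : Type*} [Fintype N]

lemma dualValue_sub_coveredValue (b : E → ℤ) (ρ : N → Finset E → ℤ) (z : N → E → ℤ)
    (S : Finset E) :
    dualValue b ρ S - coveredValue b z =
      ∑ i, (ρ i Sᶜ - ∑ e ∈ Sᶜ, z i e) + ∑ e ∈ S, (b e - min (∑ i, z i e) (b e))
        + ∑ e ∈ Sᶜ, (∑ i, z i e - min (∑ i, z i e) (b e)) := by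
  rw [dualValue, coveredValue, ← sum_compl_add_sum S, sum_sub_distrib, sum_sub_distrib,
    sum_sub_distrib, sum_comm (s := univ) (t := Sᶜ)]
  ring

variable {b : E → ℤ} {B : N → Set (E → ℤ)} {ρ : N → Finset E → ℤ} {z : N → E → ℤ}

lemma coveredValue_le_dualValue (hρ : ∀ i, IsRank (B i) (ρ i)) (hz : ∀ i, z i ∈ B i)
    (S : Finset E) : coveredValue b z ≤ dualValue b ρ S := by
  have := dualValue_sub_coveredValue b ρ z S
  have h₁ := sum_nonneg fun i (_ : i ∈ univ) => sub_nonneg.2 ((hρ i).sum_le (hz i) Sᶜ)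
  have h₂ := sum_nonneg fun e (_ : e ∈ S) => sub_nonneg.2 (min_le_right (∑ i, z i e) (b e))
  have h₃ := sum_nonneg fun e (_ : e ∈ Sᶜ) => sub_nonneg.2 (min_le_left (∑ i, z i e) (b e))
  omega

lemma dualValue_eq_coveredValue_iff (hρ : ∀ i, IsRank (B i) (ρ i)) (hz : ∀ i, z i ∈ B i)
    (S : Finset E) : dualValue b ρ S = coveredValue b z ↔ OverProps b ρ z S := by
  have h₁ : ∀ i ∈ univ, 0 ≤ ρ i Sᶜ - ∑ e ∈ Sᶜ, z i e :=
    fun i _ => sub_nonneg.2 ((hρ i).sum_le (hz i) Sᶜ)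
  have h₂ : ∀ e ∈ S, 0 ≤ b e - min (∑ i, z i e) (b e) :=
    fun e _ => sub_nonneg.2 (min_le_right _ _)
  have h₃ : ∀ e ∈ Sᶜ, 0 ≤ ∑ i, z i e - min (∑ i, z i e) (b e) :=
    fun e _ => sub_nonneg.2 (min_le_left _ _)
  rw [← sub_eq_zero, dualValue_sub_coveredValue,
    add_eq_zero_iff_of_nonneg (add_nonneg (sum_nonneg h₁) (sum_nonneg h₂)) (sum_nonneg h₃),
    add_eq_zero_iff_of_nonneg (sum_nonneg h₁) (sum_nonneg h₂), sum_eq_zero_iff_of_nonneg h₁,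
    sum_eq_zero_iff_of_nonneg h₂, sum_eq_zero_iff_of_nonneg h₃, OverProps, and_assoc]
  refine and_congr ?_ (and_congr ?_ ?_)
  · simp [sub_eq_zero, eq_comm]
  · simp [sub_eq_zero]
  · refine forall_congr' fun e => ?_
    rw [mem_compl, sub_eq_zero, eq_comm, min_eq_left_iff, ← not_lt, not_imp_comm, not_not]

end Duality

section Core

variable {N : Type*} [Fintype N] {b : E → ℤ} {B : N → Set (E → ℤ)} {ρ : N → Finset E → ℤ}
  {z : N → E → ℤ}

open Classical in
noncomputable def reachableFromOversold (b : E → ℤ) (B : N → Set (E → ℤ)) (z : N → E → ℤ) :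
    Finset E :=
  univ.filter fun f => ∃ o, b o < ∑ i, z i o ∧ ReflTransGen (ExchangeArc B z) o f

lemma mem_reachableFromOversold {f : E} : f ∈ reachableFromOversold b B z ↔
    ∃ o, b o < ∑ i, z i o ∧ ReflTransGen (ExchangeArc B z) o f := by
  simp [reachableFromOversold]

lemma reachableFromOversold_subset (hρ : ∀ i, IsRank (B i) (ρ i)) {S : Finset E}
    (hS : OverProps b ρ z S) : reachableFromOversold b B z ⊆ S := by
  intro f hf
  rw [mem_reachableFromOversold] at hf
  obtain ⟨o, ho, hof⟩ := hf
  induction hof with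
  | refl => exact hS.2.2 o ho
  | tail _ hef ih =>
    obtain ⟨i, hi⟩ := hef
    by_contra hf'
    exact mem_compl.1 (Tight.mem_of_exchange_mem (hρ i) (hS.1 i) hi (mem_compl.2 hf')) ih

lemma overProps_reachableFromOversold (hM : ∀ i, MConvex (B i))
    (hρ : ∀ i, IsRank (B i) (ρ i)) (hz : ∀ i, z i ∈ B i)
    (hopt : ∀ z' : N → E → ℤ, (∀ i, z' i ∈ B i) → coveredValue b z' ≤ coveredValue b z) :
    OverProps b ρ z (reachableFromOversold b B z) := by
  classical
  refine ⟨fun i => tight_of_exchange_closed (hM i) (hρ i) (hz i) fun e f he hfe => ?_,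
    fun e he hu => ?_, fun e he => mem_reachableFromOversold.2 ⟨e, he, .refl⟩⟩
  · rw [mem_compl, mem_reachableFromOversold] at he ⊢
    rintro ⟨o, ho, hof⟩
    exact he ⟨o, ho, hof.tail ⟨i, hfe⟩⟩
  · obtain ⟨o, ho, hoe⟩ := mem_reachableFromOversold.1 he
    obtain ⟨k, hk⟩ := reflTransGen_iff_exists_reachesIn.1 hoe
    exact not_reachesIn_of_optimal b hM k hz hopt ho hu hk

end Core

theorem stmt7_general {N : Type*} [Fintype N] (b : E → ℤ) (B : N → Set (E → ℤ))
    (hM : ∀ i, MConvex (B i))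
    (ρ : N → Finset E → ℤ) (hρ : ∀ i, IsRank (B i) (ρ i))
    (z : N → E → ℤ) (hz : ∀ i, z i ∈ B i)
    (hopt : ∀ z' : N → E → ℤ, (∀ i, z' i ∈ B i) →
      coveredValue b z' ≤ coveredValue b z) :
    (∀ S : Finset E,
      (∀ T : Finset E, dualValue b ρ S ≤ dualValue b ρ T) ↔ OverProps b ρ z S) ∧
    (∃! S : Finset E, OverProps b ρ z S ∧
      ∀ S' : Finset E, OverProps b ρ z S' → S ⊆ S') := by
  set Q := reachableFromOversold b B z
  have hQ : OverProps b ρ z Q := overProps_reachableFromOversold hM hρ hz hopt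
  have hdual := dualValue_eq_coveredValue_iff (b := b) hρ hz
  have hweak := coveredValue_le_dualValue (b := b) hρ hz
  refine ⟨fun S => ⟨fun hS => ?_, fun hS T => ((hdual S).2 hS).trans_le (hweak T)⟩,
    Q, ⟨hQ, fun S hS => reachableFromOversold_subset hρ hS⟩, fun S hS => ?_⟩
  · exact (hdual S).1 (le_antisymm ((hS Q).trans ((hdual Q).2 hQ).le) (hweak S))
  · exact hS.2 Q hQ |>.antisymm (reachableFromOversold_subset hρ hS.1)

/-- For an optimal solution of the polymatroid sum problem, a set is maximal
overdemanded (a minimizer of the dual objective) iff it satisfies the three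
properties, and there is a unique inclusion-wise minimal such set. -/
theorem stmt7 {N : Type*} [Fintype N] (b : E → ℤ) (B : N → Set (E → ℤ))
    (hBox : ∀ i, B i ⊆ Box b) (hM : ∀ i, MConvex (B i))
    (ρ : N → Finset E → ℤ) (hρ : ∀ i, IsRank (B i) (ρ i))
    (z : N → E → ℤ) (hz : ∀ i, z i ∈ B i)
    (hopt : ∀ z' : N → E → ℤ, (∀ i, z' i ∈ B i) →
      coveredValue b z' ≤ coveredValue b z) :
    (∀ S : Finset E,
      (∀ T : Finset E, dualValue b ρ S ≤ dualValue b ρ T) ↔ OverProps b ρ z S) ∧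
    (∃! S : Finset E, OverProps b ρ z S ∧
      ∀ S' : Finset E, OverProps b ρ z S' → S ⊆ S') :=
  stmt7_general b B hM ρ hρ z hz hopt
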